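/- arXiv:1403.5218 — 10 statements merged into one kernel-verified Lean document; each statement's English description precedes it below -/
import Mathlib

section
/- Let S be an LAD-AG-groupoid, i.e., a set with a binary operation · satisfying the left invertive law (a·b)·c = (c·b)·a and the identity a·(b·c) = (a·b)·(c·a) for all a, b, c. Then S is a right commutative AG-groupoid, i.e., a·(b·c) = a·(c·b) for all a, b, c ∈ S. -/
theorem lad_is_right_commutative {S : Type*} (mul : S → S → S)
    (inv : ∀ a b c : S, mul (mul a b) c = mul (mul c b) a)
    (lad : ∀ a b c : S, mul a (mul b c) = mul (mul a b) (mul c a)) :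
    ∀ a b c : S, mul a (mul b c) = mul a (mul c b) := by
  intro a b c
  rw [lad a b c, lad a c b]
  calc mul (mul a b) (mul c a)
      = mul (mul (mul c a) b) a := inv a b (mul c a)
    _ = mul (mul (mul b a) c) a := by rw [inv c a b]
    _ = mul (mul a c) (mul b a) := inv (mul b a) c a
end

section
/- Let S be an LAD-AG-groupoid, i.e., a set with a binary operation · satisfying the left invertive law (a·b)·c = (c·b)·a and the identity a·(b·c) = (a·b)·(c·a) for all a, b, c. Then S is a self-dual AG-groupoid, i.e., a·(b·c) = c·(b·a) for all a, b, c ∈ S. -/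
theorem lad_is_self_dual {S : Type*} (mul : S → S → S)
    (inv : ∀ a b c : S, mul (mul a b) c = mul (mul c b) a)
    (lad : ∀ a b c : S, mul a (mul b c) = mul (mul a b) (mul c a)) :
    ∀ a b c : S, mul a (mul b c) = mul c (mul b a) := by
  intro a b c
  calc mul a (mul b c)
    _ = (mul (mul a b) (mul c a)) := (lad a b c)
    _ = (mul (mul (mul c a) b) a) := (inv a b (mul c a))
    _ = (mul (mul (mul b a) c) a) := (congrArg (fun t => mul t a) (inv c a b))
    _ = (mul (mul a c) (mul b a)) := (inv (mul b a) c a)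
    _ = (mul (mul (mul a c) b) (mul a (mul a c))) := (lad (mul a c) b a)
    _ = (mul (mul (mul a (mul a c)) b) (mul a c)) := (inv (mul a c) b (mul a (mul a c)))
    _ = (mul (mul (mul (mul a a) (mul c a)) b) (mul a c)) := (congrArg (fun t => mul t (mul a c)) (congrArg (fun t => mul t b) (lad a a c)))
    _ = (mul (mul (mul (mul (mul c a) a) a) b) (mul a c)) := (congrArg (fun t => mul t (mul a c)) (congrArg (fun t => mul t b) (inv a a (mul c a))))
    _ = (mul (mul (mul b a) (mul (mul c a) a)) (mul a c)) := (congrArg (fun t => mul t (mul a c)) (inv (mul (mul c a) a) a b))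
    _ = (mul (mul (mul a c) (mul (mul c a) a)) (mul b a)) := (inv (mul b a) (mul (mul c a) a) (mul a c))
    _ = (mul (mul a (mul c (mul c a))) (mul b a)) := (congrArg (fun t => mul t (mul b a)) (lad a c (mul c a)).symm)
    _ = (mul a (mul (mul c (mul c a)) b)) := (lad a (mul c (mul c a)) b).symm
    _ = (mul a (mul (mul (mul c c) (mul a c)) b)) := (congrArg (mul a) (congrArg (fun t => mul t b) (lad c c a)))
    _ = (mul a (mul (mul b (mul a c)) (mul c c))) := (congrArg (mul a) (inv (mul c c) (mul a c) b))
    _ = (mul (mul a (mul b (mul a c))) (mul (mul c c) a)) := (lad a (mul b (mul a c)) (mul c c))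
    _ = (mul (mul (mul (mul c c) a) (mul b (mul a c))) a) := (inv a (mul b (mul a c)) (mul (mul c c) a))
    _ = (mul (mul (mul (mul b (mul a c)) a) (mul c c)) a) := (congrArg (fun t => mul t a) (inv (mul c c) a (mul b (mul a c))))
    _ = (mul (mul a (mul c c)) (mul (mul b (mul a c)) a)) := (inv (mul (mul b (mul a c)) a) (mul c c) a)
    _ = (mul a (mul (mul c c) (mul b (mul a c)))) := (lad a (mul c c) (mul b (mul a c))).symm
    _ = (mul a (mul (mul (mul b (mul a c)) c) c)) := (congrArg (mul a) (inv c c (mul b (mul a c))))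
    _ = (mul (mul a (mul (mul b (mul a c)) c)) (mul c a)) := (lad a (mul (mul b (mul a c)) c) c)
    _ = (mul (mul (mul c a) (mul (mul b (mul a c)) c)) a) := (inv a (mul (mul b (mul a c)) c) (mul c a))
    _ = (mul (mul (mul (mul (mul b (mul a c)) c) a) c) a) := (congrArg (fun t => mul t a) (inv c a (mul (mul b (mul a c)) c)))
    _ = (mul (mul (mul (mul a c) (mul b (mul a c))) c) a) := (congrArg (fun t => mul t a) (congrArg (fun t => mul t c) (inv (mul b (mul a c)) c a)))
    _ = (mul (mul (mul c (mul b (mul a c))) (mul a c)) a) := (congrArg (fun t => mul t a) (inv (mul a c) (mul b (mul a c)) c))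
    _ = (mul (mul c (mul (mul b (mul a c)) a)) a) := (congrArg (fun t => mul t a) (lad c (mul b (mul a c)) a).symm)
    _ = (mul (mul a (mul (mul b (mul a c)) a)) c) := (inv c (mul (mul b (mul a c)) a) a)
    _ = (mul (mul a (mul (mul (mul b a) (mul c b)) a)) c) := (congrArg (fun t => mul t c) (congrArg (mul a) (congrArg (fun t => mul t a) (lad b a c))))
    _ = (mul (mul a (mul (mul a (mul c b)) (mul b a))) c) := (congrArg (fun t => mul t c) (congrArg (mul a) (inv (mul b a) (mul c b) a)))
    _ = (mul (mul a (mul a (mul (mul c b) b))) c) := (congrArg (fun t => mul t c) (congrArg (mul a) (lad a (mul c b) b).symm))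
    _ = (mul (mul (mul a a) (mul (mul (mul c b) b) a)) c) := (congrArg (fun t => mul t c) (lad a a (mul (mul c b) b)))
    _ = (mul (mul (mul (mul (mul (mul c b) b) a) a) a) c) := (congrArg (fun t => mul t c) (inv a a (mul (mul (mul c b) b) a)))
    _ = (mul (mul (mul (mul a a) (mul (mul c b) b)) a) c) := (congrArg (fun t => mul t c) (congrArg (fun t => mul t a) (inv (mul (mul c b) b) a a)))
    _ = (mul (mul (mul a (mul (mul c b) b)) (mul a a)) c) := (congrArg (fun t => mul t c) (inv (mul a a) (mul (mul c b) b) a))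
    _ = (mul (mul a (mul (mul (mul c b) b) a)) c) := (congrArg (fun t => mul t c) (lad a (mul (mul c b) b) a).symm)
    _ = (mul (mul a (mul (mul a b) (mul c b))) c) := (congrArg (fun t => mul t c) (congrArg (mul a) (inv (mul c b) b a)))
    _ = (mul (mul (mul a (mul a b)) (mul (mul c b) a)) c) := (congrArg (fun t => mul t c) (lad a (mul a b) (mul c b)))
    _ = (mul (mul (mul (mul (mul c b) a) (mul a b)) a) c) := (congrArg (fun t => mul t c) (inv a (mul a b) (mul (mul c b) a)))
    _ = (mul (mul (mul (mul (mul a b) a) (mul c b)) a) c) := (congrArg (fun t => mul t c) (congrArg (fun t => mul t a) (inv (mul c b) a (mul a b))))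
    _ = (mul (mul (mul a (mul c b)) (mul (mul a b) a)) c) := (congrArg (fun t => mul t c) (inv (mul (mul a b) a) (mul c b) a))
    _ = (mul (mul a (mul (mul c b) (mul a b))) c) := (congrArg (fun t => mul t c) (lad a (mul c b) (mul a b)).symm)
    _ = (mul (mul a (mul (mul (mul a b) b) c)) c) := (congrArg (fun t => mul t c) (congrArg (mul a) (inv c b (mul a b))))
    _ = (mul (mul (mul a (mul (mul a b) b)) (mul c a)) c) := (congrArg (fun t => mul t c) (lad a (mul (mul a b) b) c))
    _ = (mul (mul (mul (mul c a) (mul (mul a b) b)) a) c) := (congrArg (fun t => mul t c) (inv a (mul (mul a b) b) (mul c a)))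
    _ = (mul (mul (mul (mul (mul (mul a b) b) a) c) a) c) := (congrArg (fun t => mul t c) (congrArg (fun t => mul t a) (inv c a (mul (mul a b) b))))
    _ = (mul (mul (mul a c) (mul (mul (mul a b) b) a)) c) := (congrArg (fun t => mul t c) (inv (mul (mul (mul a b) b) a) c a))
    _ = (mul (mul a (mul c (mul (mul a b) b))) c) := (congrArg (fun t => mul t c) (lad a c (mul (mul a b) b)).symm)
    _ = (mul (mul a (mul (mul c (mul a b)) (mul b c))) c) := (congrArg (fun t => mul t c) (congrArg (mul a) (lad c (mul a b) b)))
    _ = (mul (mul a (mul (mul (mul b c) (mul a b)) c)) c) := (congrArg (fun t => mul t c) (congrArg (mul a) (inv c (mul a b) (mul b c))))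
    _ = (mul (mul a (mul (mul b (mul c a)) c)) c) := (congrArg (fun t => mul t c) (congrArg (mul a) (congrArg (fun t => mul t c) (lad b c a).symm)))
    _ = (mul (mul (mul a (mul b (mul c a))) (mul c a)) c) := (congrArg (fun t => mul t c) (lad a (mul b (mul c a)) c))
    _ = (mul (mul (mul (mul c a) (mul b (mul c a))) a) c) := (congrArg (fun t => mul t c) (inv a (mul b (mul c a)) (mul c a)))
    _ = (mul (mul (mul (mul (mul b (mul c a)) a) c) a) c) := (congrArg (fun t => mul t c) (congrArg (fun t => mul t a) (inv c a (mul b (mul c a)))))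
    _ = (mul (mul (mul a c) (mul (mul b (mul c a)) a)) c) := (congrArg (fun t => mul t c) (inv (mul (mul b (mul c a)) a) c a))
    _ = (mul (mul c (mul (mul b (mul c a)) a)) (mul a c)) := (inv (mul a c) (mul (mul b (mul c a)) a) c)
    _ = (mul c (mul (mul (mul b (mul c a)) a) a)) := (lad c (mul (mul b (mul c a)) a) a).symm
    _ = (mul c (mul (mul a a) (mul b (mul c a)))) := (congrArg (mul c) (inv (mul b (mul c a)) a a))
    _ = (mul (mul c (mul a a)) (mul (mul b (mul c a)) c)) := (lad c (mul a a) (mul b (mul c a)))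
    _ = (mul (mul (mul (mul b (mul c a)) c) (mul a a)) c) := (inv c (mul a a) (mul (mul b (mul c a)) c))
    _ = (mul (mul (mul (mul a a) c) (mul b (mul c a))) c) := (congrArg (fun t => mul t c) (inv (mul b (mul c a)) c (mul a a)))
    _ = (mul (mul c (mul b (mul c a))) (mul (mul a a) c)) := (inv (mul (mul a a) c) (mul b (mul c a)) c)
    _ = (mul c (mul (mul b (mul c a)) (mul a a))) := (lad c (mul b (mul c a)) (mul a a)).symm
    _ = (mul c (mul (mul (mul a a) (mul c a)) b)) := (congrArg (mul c) (inv b (mul c a) (mul a a)))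
    _ = (mul (mul c (mul (mul a a) (mul c a))) (mul b c)) := (lad c (mul (mul a a) (mul c a)) b)
    _ = (mul (mul c (mul a (mul a c))) (mul b c)) := (congrArg (fun t => mul t (mul b c)) (congrArg (mul c) (lad a a c).symm))
    _ = (mul (mul (mul c a) (mul (mul a c) c)) (mul b c)) := (congrArg (fun t => mul t (mul b c)) (lad c a (mul a c)))
    _ = (mul (mul (mul b c) (mul (mul a c) c)) (mul c a)) := (inv (mul c a) (mul (mul a c) c) (mul b c))
    _ = (mul (mul (mul (mul (mul a c) c) c) b) (mul c a)) := (congrArg (fun t => mul t (mul c a)) (inv b c (mul (mul a c) c)))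
    _ = (mul (mul (mul c a) b) (mul (mul (mul a c) c) c)) := (inv (mul (mul (mul a c) c) c) b (mul c a))
    _ = (mul (mul (mul c a) b) (mul (mul c c) (mul a c))) := (congrArg (mul (mul (mul c a) b)) (inv (mul a c) c c))
    _ = (mul (mul (mul c a) b) (mul c (mul c a))) := (congrArg (mul (mul (mul c a) b)) (lad c c a).symm)
    _ = (mul (mul c a) (mul b c)) := (lad (mul c a) b c).symm
    _ = (mul (mul (mul b c) a) c) := (inv c a (mul b c))
    _ = (mul (mul (mul a c) b) c) := (congrArg (fun t => mul t c) (inv b c a))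
    _ = (mul (mul c b) (mul a c)) := (inv (mul a c) b c)
    _ = (mul c (mul b a)) := (lad c b a).symm
end

section
/- Let S be an LAD-AG-groupoid, i.e., a set with a binary operation · satisfying the left invertive law (a·b)·c = (c·b)·a and the identity a·(b·c) = (a·b)·(c·a) for all a, b, c. Then S is a left distributive AG-groupoid, i.e., a·(b·c) = (a·b)·(a·c) for all a, b, c ∈ S. -/
theorem lad_is_left_distributive {S : Type*} (mul : S → S → S)
    (inv : ∀ a b c : S, mul (mul a b) c = mul (mul c b) a)
    (lad : ∀ a b c : S, mul a (mul b c) = mul (mul a b) (mul c a)) :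
    ∀ a b c : S, mul a (mul b c) = mul (mul a b) (mul a c) := by
  intro a b c
  calc mul a (mul b c)
      = mul (mul a b) (mul c a) := lad a b c
    _ = mul (mul (mul a b) c) (mul a (mul a b)) := lad (mul a b) c a
    _ = mul (mul (mul a (mul a b)) c) (mul a b) := inv (mul a b) c (mul a (mul a b))
    _ = mul (mul (mul c (mul a b)) a) (mul a b) := by rw [inv a (mul a b) c]
    _ = mul (mul (mul a b) a) (mul c (mul a b)) := inv (mul c (mul a b)) a (mul a b)
    _ = mul (mul a b) (mul a c) := (lad (mul a b) a c).symm
end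

section
/- Let S be an LAD-AG-groupoid, i.e., a set with a binary operation · satisfying the left invertive law (a·b)·c = (c·b)·a and the identity a·(b·c) = (a·b)·(c·a) for all a, b, c. Then S is a paramedial AG-groupoid, i.e., (a·b)·(c·d) = (d·b)·(c·a) for all a, b, c, d ∈ S. -/
theorem lad_is_paramedial {S : Type*} (mul : S → S → S)
    (inv : ∀ a b c : S, mul (mul a b) c = mul (mul c b) a)
    (lad : ∀ a b c : S, mul a (mul b c) = mul (mul a b) (mul c a)) :
    ∀ a b c d : S, mul (mul a b) (mul c d) = mul (mul d b) (mul c a) := by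
  intro a b c d
  calc mul (mul a b) (mul c d)
    _ = (mul (mul (mul a b) c) (mul d (mul a b))) := lad (mul a b) c d
    _ = (mul (mul (mul c b) a) (mul d (mul a b))) := congrArg (fun t => mul t (mul d (mul a b))) (inv a b c)
    _ = (mul (mul (mul d (mul a b)) a) (mul c b)) := inv (mul c b) a (mul d (mul a b))
    _ = (mul (mul (mul (mul d a) (mul b d)) a) (mul c b)) := congrArg (fun t => mul t (mul c b)) (congrArg (fun t => mul t a) (lad d a b))
    _ = (mul (mul (mul (mul (mul b d) a) d) a) (mul c b)) := congrArg (fun t => mul t (mul c b)) (congrArg (fun t => mul t a) (inv d a (mul b d)))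
    _ = (mul (mul (mul a d) (mul (mul b d) a)) (mul c b)) := congrArg (fun t => mul t (mul c b)) (inv (mul (mul b d) a) d a)
    _ = (mul (mul a (mul d (mul b d))) (mul c b)) := congrArg (fun t => mul t (mul c b)) ((lad a d (mul b d)).symm)
    _ = (mul (mul a (mul (mul d b) (mul d d))) (mul c b)) := congrArg (fun t => mul t (mul c b)) (congrArg (mul a) (lad d b d))
    _ = (mul (mul (mul a (mul d b)) (mul (mul d d) a)) (mul c b)) := congrArg (fun t => mul t (mul c b)) (lad a (mul d b) (mul d d))
    _ = (mul (mul (mul (mul (mul d d) a) (mul d b)) a) (mul c b)) := congrArg (fun t => mul t (mul c b)) (inv a (mul d b) (mul (mul d d) a))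
    _ = (mul (mul (mul (mul (mul d b) a) (mul d d)) a) (mul c b)) := congrArg (fun t => mul t (mul c b)) (congrArg (fun t => mul t a) (inv (mul d d) a (mul d b)))
    _ = (mul (mul (mul a (mul d d)) (mul (mul d b) a)) (mul c b)) := congrArg (fun t => mul t (mul c b)) (inv (mul (mul d b) a) (mul d d) a)
    _ = (mul (mul a (mul (mul d d) (mul d b))) (mul c b)) := congrArg (fun t => mul t (mul c b)) ((lad a (mul d d) (mul d b)).symm)
    _ = (mul (mul a (mul (mul (mul d b) d) d)) (mul c b)) := congrArg (fun t => mul t (mul c b)) (congrArg (mul a) (inv d d (mul d b)))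
    _ = (mul (mul (mul a (mul (mul d b) d)) (mul d a)) (mul c b)) := congrArg (fun t => mul t (mul c b)) (lad a (mul (mul d b) d) d)
    _ = (mul (mul (mul (mul d a) (mul (mul d b) d)) a) (mul c b)) := congrArg (fun t => mul t (mul c b)) (inv a (mul (mul d b) d) (mul d a))
    _ = (mul (mul (mul (mul (mul (mul d b) d) a) d) a) (mul c b)) := congrArg (fun t => mul t (mul c b)) (congrArg (fun t => mul t a) (inv d a (mul (mul d b) d)))
    _ = (mul (mul (mul (mul (mul a d) (mul d b)) d) a) (mul c b)) := congrArg (fun t => mul t (mul c b)) (congrArg (fun t => mul t a) (congrArg (fun t => mul t d) (inv (mul d b) d a)))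
    _ = (mul (mul (mul (mul d (mul d b)) (mul a d)) a) (mul c b)) := congrArg (fun t => mul t (mul c b)) (congrArg (fun t => mul t a) (inv (mul a d) (mul d b) d))
    _ = (mul (mul (mul d (mul (mul d b) a)) a) (mul c b)) := congrArg (fun t => mul t (mul c b)) (congrArg (fun t => mul t a) ((lad d (mul d b) a).symm))
    _ = (mul (mul (mul d (mul (mul a b) d)) a) (mul c b)) := congrArg (fun t => mul t (mul c b)) (congrArg (fun t => mul t a) (congrArg (mul d) (inv d b a)))
    _ = (mul (mul (mul a (mul (mul a b) d)) d) (mul c b)) := congrArg (fun t => mul t (mul c b)) (inv d (mul (mul a b) d) a)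
    _ = (mul (mul (mul (mul a (mul a b)) (mul d a)) d) (mul c b)) := congrArg (fun t => mul t (mul c b)) (congrArg (fun t => mul t d) (lad a (mul a b) d))
    _ = (mul (mul (mul (mul (mul d a) (mul a b)) a) d) (mul c b)) := congrArg (fun t => mul t (mul c b)) (congrArg (fun t => mul t d) (inv a (mul a b) (mul d a)))
    _ = (mul (mul (mul (mul (mul (mul a b) a) d) a) d) (mul c b)) := congrArg (fun t => mul t (mul c b)) (congrArg (fun t => mul t d) (congrArg (fun t => mul t a) (inv d a (mul a b))))
    _ = (mul (mul (mul (mul a d) (mul (mul a b) a)) d) (mul c b)) := congrArg (fun t => mul t (mul c b)) (congrArg (fun t => mul t d) (inv (mul (mul a b) a) d a))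
    _ = (mul (mul (mul d (mul (mul a b) a)) (mul a d)) (mul c b)) := congrArg (fun t => mul t (mul c b)) (inv (mul a d) (mul (mul a b) a) d)
    _ = (mul (mul d (mul (mul (mul a b) a) a)) (mul c b)) := congrArg (fun t => mul t (mul c b)) ((lad d (mul (mul a b) a) a).symm)
    _ = (mul (mul d (mul (mul a a) (mul a b))) (mul c b)) := congrArg (fun t => mul t (mul c b)) (congrArg (mul d) (inv (mul a b) a a))
    _ = (mul (mul (mul d (mul a a)) (mul (mul a b) d)) (mul c b)) := congrArg (fun t => mul t (mul c b)) (lad d (mul a a) (mul a b))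
    _ = (mul (mul (mul (mul (mul a b) d) (mul a a)) d) (mul c b)) := congrArg (fun t => mul t (mul c b)) (inv d (mul a a) (mul (mul a b) d))
    _ = (mul (mul (mul (mul (mul a a) d) (mul a b)) d) (mul c b)) := congrArg (fun t => mul t (mul c b)) (congrArg (fun t => mul t d) (inv (mul a b) d (mul a a)))
    _ = (mul (mul (mul d (mul a b)) (mul (mul a a) d)) (mul c b)) := congrArg (fun t => mul t (mul c b)) (inv (mul (mul a a) d) (mul a b) d)
    _ = (mul (mul d (mul (mul a b) (mul a a))) (mul c b)) := congrArg (fun t => mul t (mul c b)) ((lad d (mul a b) (mul a a)).symm)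
    _ = (mul (mul d (mul a (mul b a))) (mul c b)) := congrArg (fun t => mul t (mul c b)) (congrArg (mul d) ((lad a b a).symm))
    _ = (mul (mul (mul d a) (mul (mul b a) d)) (mul c b)) := congrArg (fun t => mul t (mul c b)) (lad d a (mul b a))
    _ = (mul (mul (mul (mul (mul b a) d) a) d) (mul c b)) := congrArg (fun t => mul t (mul c b)) (inv d a (mul (mul b a) d))
    _ = (mul (mul (mul (mul a d) (mul b a)) d) (mul c b)) := congrArg (fun t => mul t (mul c b)) (congrArg (fun t => mul t d) (inv (mul b a) d a))
    _ = (mul (mul (mul a (mul d b)) d) (mul c b)) := congrArg (fun t => mul t (mul c b)) (congrArg (fun t => mul t d) ((lad a d b).symm))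
    _ = (mul (mul (mul c b) d) (mul a (mul d b))) := inv (mul a (mul d b)) d (mul c b)
    _ = (mul (mul (mul d b) c) (mul a (mul d b))) := congrArg (fun t => mul t (mul a (mul d b))) (inv c b d)
    _ = (mul (mul d b) (mul c a)) := (lad (mul d b) c a).symm
end

section
/- Let S be an LAD-AG-groupoid, i.e., a set with a binary operation · satisfying the left invertive law (a·b)·c = (c·b)·a and the identity a·(b·c) = (a·b)·(c·a) for all a, b, c. Then S is a left nuclear square AG-groupoid, i.e., (a·a)·(b·c) = ((a·a)·b)·c for all a, b, c ∈ S. -/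
theorem lad_is_left_nuclear_square {S : Type*} (mul : S → S → S)
    (inv : ∀ a b c : S, mul (mul a b) c = mul (mul c b) a)
    (lad : ∀ a b c : S, mul a (mul b c) = mul (mul a b) (mul c a)) :
    ∀ a b c : S, mul (mul a a) (mul b c) = mul (mul (mul a a) b) c := by
  intro a b c
  calc (mul (mul a a) (mul b c))
    _ = (mul (mul (mul a a) b) (mul c (mul a a))) := (lad (mul a a) b c)
    _ = (mul (mul (mul b a) a) (mul c (mul a a))) := (congrFun (congrArg mul (inv a a b)) (mul c (mul a a)))
    _ = (mul (mul (mul c (mul a a)) a) (mul b a)) := (inv (mul b a) a (mul c (mul a a)))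
    _ = (mul (mul (mul (mul c a) (mul a c)) a) (mul b a)) := (congrFun (congrArg mul (congrFun (congrArg mul (lad c a a)) a)) (mul b a))
    _ = (mul (mul (mul (mul (mul a c) a) c) a) (mul b a)) := (congrFun (congrArg mul (congrFun (congrArg mul (inv c a (mul a c))) a)) (mul b a))
    _ = (mul (mul (mul a c) (mul (mul a c) a)) (mul b a)) := (congrFun (congrArg mul (inv (mul (mul a c) a) c a)) (mul b a))
    _ = (mul (mul a (mul c (mul a c))) (mul b a)) := (congrFun (congrArg mul (lad a c (mul a c)).symm) (mul b a))
    _ = (mul (mul a (mul (mul c a) (mul c c))) (mul b a)) := (congrFun (congrArg mul (congrArg (mul a) (lad c a c))) (mul b a))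
    _ = (mul (mul (mul a (mul c a)) (mul (mul c c) a)) (mul b a)) := (congrFun (congrArg mul (lad a (mul c a) (mul c c))) (mul b a))
    _ = (mul (mul (mul (mul (mul c c) a) (mul c a)) a) (mul b a)) := (congrFun (congrArg mul (inv a (mul c a) (mul (mul c c) a))) (mul b a))
    _ = (mul (mul (mul (mul (mul c a) a) (mul c c)) a) (mul b a)) := (congrFun (congrArg mul (congrFun (congrArg mul (inv (mul c c) a (mul c a))) a)) (mul b a))
    _ = (mul (mul (mul a (mul c c)) (mul (mul c a) a)) (mul b a)) := (congrFun (congrArg mul (inv (mul (mul c a) a) (mul c c) a)) (mul b a))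
    _ = (mul (mul a (mul (mul c c) (mul c a))) (mul b a)) := (congrFun (congrArg mul (lad a (mul c c) (mul c a)).symm) (mul b a))
    _ = (mul (mul a (mul (mul (mul c a) c) c)) (mul b a)) := (congrFun (congrArg mul (congrArg (mul a) (inv c c (mul c a)))) (mul b a))
    _ = (mul (mul (mul a (mul (mul c a) c)) (mul c a)) (mul b a)) := (congrFun (congrArg mul (lad a (mul (mul c a) c) c)) (mul b a))
    _ = (mul (mul (mul (mul a (mul c a)) (mul c a)) (mul c a)) (mul b a)) := (congrFun (congrArg mul (congrFun (congrArg mul (lad a (mul c a) c)) (mul c a))) (mul b a))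
    _ = (mul (mul (mul (mul c a) (mul c a)) (mul a (mul c a))) (mul b a)) := (congrFun (congrArg mul (inv (mul a (mul c a)) (mul c a) (mul c a))) (mul b a))
    _ = (mul (mul (mul c a) (mul (mul c a) a)) (mul b a)) := (congrFun (congrArg mul (lad (mul c a) (mul c a) a).symm) (mul b a))
    _ = (mul (mul (mul b a) (mul (mul c a) a)) (mul c a)) := (inv (mul c a) (mul (mul c a) a) (mul b a))
    _ = (mul (mul (mul (mul (mul c a) a) a) b) (mul c a)) := (congrFun (congrArg mul (inv b a (mul (mul c a) a))) (mul c a))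
    _ = (mul (mul (mul c a) b) (mul (mul (mul c a) a) a)) := (inv (mul (mul (mul c a) a) a) b (mul c a))
    _ = (mul (mul (mul c a) b) (mul (mul (mul a a) c) a)) := (congrArg (mul (mul (mul c a) b)) (congrFun (congrArg mul (inv c a a)) a))
    _ = (mul (mul (mul c a) b) (mul (mul a c) (mul a a))) := (congrArg (mul (mul (mul c a) b)) (inv (mul a a) c a))
    _ = (mul (mul (mul c a) b) (mul a (mul c a))) := (congrArg (mul (mul (mul c a) b)) (lad a c a).symm)
    _ = (mul (mul c a) (mul b a)) := (lad (mul c a) b a).symm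
    _ = (mul (mul (mul b a) a) c) := (inv c a (mul b a))
    _ = (mul (mul (mul a a) b) c) := (congrFun (congrArg mul (inv b a a)) c)
end

section
/- Let S be an RAD-AG-groupoid, i.e., a set with a binary operation · satisfying the left invertive law (a·b)·c = (c·b)·a and the identity (a·b)·c = (c·a)·(b·c) for all a, b, c. Then S is a right distributive AG-groupoid, i.e., (a·b)·c = (a·c)·(b·c) for all a, b, c ∈ S. -/
theorem rad_is_right_distributive {S : Type*} (mul : S → S → S)
    (inv : ∀ a b c : S, mul (mul a b) c = mul (mul c b) a)
    (rad : ∀ a b c : S, mul (mul a b) c = mul (mul c a) (mul b c)) :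
    ∀ a b c : S, mul (mul a b) c = mul (mul a c) (mul b c) := by
  intro a b c
  exact (Eq.trans (Eq.trans (Eq.trans (Eq.trans (Eq.trans (Eq.trans (Eq.trans (Eq.trans (Eq.trans (Eq.trans (Eq.trans (Eq.trans (Eq.trans (Eq.trans (Eq.trans (Eq.trans (Eq.trans (Eq.trans (Eq.trans (Eq.trans (Eq.trans (Eq.trans (Eq.trans (Eq.trans (Eq.trans (Eq.trans (Eq.trans (Eq.trans (Eq.trans (Eq.trans (Eq.trans (Eq.trans (Eq.trans (inv a b c) (rad c b a)) (inv a c (mul b a))) (rad (mul b a) c a)) (inv a (mul b a) (mul c a))) (congrArg (fun x => mul x a) (inv c a (mul b a)))) (inv (mul (mul b a) a) c a)) (rad c (mul b a) a).symm) (inv c (mul b a) a)) (rad a (mul b a) c)) (inv c a (mul (mul b a) c))) (congrArg (fun x => mul x c) (inv (mul b a) c a))) (inv (mul a c) (mul b a) c)) (rad (mul b a) a c).symm) (congrArg (fun x => mul x c) (rad b a a))) (congrArg (fun x => mul x c) (inv a b (mul a a)))) (congrArg (fun x => mul x c) (congrArg (fun x => mul x a) (inv a a b)))) (congrArg (fun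 x => mul x c) (inv (mul b a) a a))) (congrArg (fun x => mul x c) (rad a b a).symm)) (rad (mul a b) a c)) (inv c (mul a b) (mul a c))) (congrArg (fun x => mul x c) (inv a c (mul a b)))) (inv (mul (mul a b) c) a c)) (rad a (mul a b) c).symm) (inv a (mul a b) c)) (rad c (mul a b) a)) (inv a c (mul (mul a b) a))) (congrArg (fun x => mul x a) (inv (mul a b) a c))) (inv (mul c a) (mul a b) a)) (rad (mul a b) c a).symm) (congrArg (fun x => mul x a) (rad a b c))) (inv (mul c a) (mul b c) a)) (rad (mul b c) c a).symm) (inv (mul b c) c a))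
end

section
/- Let S be an AD-AG-groupoid, i.e., a set with a binary operation · satisfying the left invertive law (a·b)·c = (c·b)·a, the identity a·(b·c) = (a·b)·(c·a), and the identity (a·b)·c = (c·a)·(b·c) for all a, b, c. Then S is a semigroup, i.e., a·(b·c) = (a·b)·c for all a, b, c ∈ S. -/
theorem ad_is_semigroup {S : Type*} (mul : S → S → S)
    (inv : ∀ a b c : S, mul (mul a b) c = mul (mul c b) a)
    (lad : ∀ a b c : S, mul a (mul b c) = mul (mul a b) (mul c a))
    (rad : ∀ a b c : S, mul (mul a b) c = mul (mul c a) (mul b c)) :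
    ∀ a b c : S, mul a (mul b c) = mul (mul a b) c := by
  intro a b c
  calc mul a (mul b c) = mul (mul a b) (mul c a) := lad a b c
    _ = mul (mul (mul c a) b) a := inv a b (mul c a)
    _ = mul (mul (mul b a) c) a := by rw [inv c a b]
    _ = mul (mul a c) (mul b a) := inv (mul b a) c a
    _ = mul (mul c b) a := (rad c b a).symm
    _ = mul (mul a b) c := inv c b a
end

section
/- There exists a binary operation · on a set S of 4 elements such that S satisfies the left invertive law (a·b)·c = (c·b)·a and the left distributive identity a·(b·c) = (a·b)·(a·c) for all a, b, c ∈ S, but S does not satisfy the LAD identity, i.e., there exist a, b, c ∈ S with a·(b·c) ≠ (a·b)·(c·a). (A witness is the Latin square on {1,2,3,4} with rows 1342, 4213, 2431, 3124, where 1·(2·4) ≠ (1·2)·(4·1).) -/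
def mul4 : Fin 4 → Fin 4 → Fin 4 :=
  ![![0, 2, 3, 1], ![3, 1, 0, 2], ![1, 3, 2, 0], ![2, 0, 1, 3]]

theorem exists_LD_not_LAD :
    ∃ mul : Fin 4 → Fin 4 → Fin 4,
      (∀ a b c, mul (mul a b) c = mul (mul c b) a) ∧
      (∀ a b c, mul a (mul b c) = mul (mul a b) (mul a c)) ∧
      (∃ a b c, mul a (mul b c) ≠ mul (mul a b) (mul c a)) := by
  refine ⟨mul4, ?_, ?_, 0, 1, 3, ?_⟩ <;> first | (intro a b c; fin_cases a <;> fin_cases b <;> fin_cases c <;> rfl) | decide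
end

section
/- There exists a binary operation · on a set S of 3 elements such that S satisfies the left invertive law (a·b)·c = (c·b)·a and the RAD identity (a·b)·c = (c·a)·(b·c) for all a, b, c ∈ S, but · is not associative. (A witness is the operation on {a,b,c} given by x·y = a for all pairs except c·b = b.) -/
theorem exists_nonassoc_RAD :
    ∃ mul : Fin 3 → Fin 3 → Fin 3,
      (∀ a b c, mul (mul a b) c = mul (mul c b) a) ∧
      (∀ a b c, mul (mul a b) c = mul (mul c a) (mul b c)) ∧
      ¬ (∀ a b c, mul a (mul b c) = mul (mul a b) c) := by
  refine ⟨fun x y => if x = 2 ∧ y = 1 then 1 else 0, ?_, ?_, ?_⟩ <;> decide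
end

section
/- There are no non-associative AD-AG-groupoids: every set S with a binary operation · satisfying the left invertive law (a·b)·c = (c·b)·a, the LAD identity a·(b·c) = (a·b)·(c·a), and the RAD identity (a·b)·c = (c·a)·(b·c) for all a, b, c ∈ S is associative. -/
theorem ad_ag_groupoid_associative {S : Type*} (mul : S → S → S)
    (inv : ∀ a b c : S, mul (mul a b) c = mul (mul c b) a)
    (lad : ∀ a b c : S, mul a (mul b c) = mul (mul a b) (mul c a))
    (rad : ∀ a b c : S, mul (mul a b) c = mul (mul c a) (mul b c)) :
    ∀ a b c : S, mul a (mul b c) = mul (mul a b) c := by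
  intro a b c
  calc mul a (mul b c)
      = mul (mul a b) (mul c a) := by rw [lad a b c]
    _ = mul (mul (mul c a) b) a := by rw [inv a b (mul c a)]
    _ = mul (mul (mul b a) c) a := by rw [inv c a b]
    _ = mul (mul a c) (mul b a) := by rw [← inv a c (mul b a)]
    _ = mul (mul c b) a := by rw [← rad c b a]
    _ = mul (mul a b) c := by rw [← inv a b c]
end
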